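/- For any permutation τ ∈ S_{2k}, any n ≥ 1, and any n×n diagonal matrix D = diag(d_1,…,d_n) over ℂ: Σ_{r=(r_1,…,r_k) ∈ {1,…,n}^k} δ'_τ(r̃) · d_{r_1} d_{r_2} ⋯ d_{r_k} = Tr'_τ(D), where r̃ = (r_1, r_1, r_2, r_2, …, r_k, r_k). -/

import Mathlib

/-!
Write `r̃ = r ∘ half`, where `half x = ⌊x/2⌋`. Since `r̃` is constant on the edges
`{2s-1, 2s}`, `δ'_τ(r̃)` is `1` exactly when `r̃` is constant on the connected components of
`Γ(τ)`, and `0` otherwise. So the sum runs over the colourings `f` of the components, and a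
component with `2μ` vertices contains `μ` of the edges `{2s-1, 2s}`, contributing
`∑ᵢ dᵢ^μ = Tr(D^μ)`.
-/

open MeasureTheory ProbabilityTheory Matrix
open scoped BigOperators ENNReal ComplexOrder

namespace WeingartenPaper

/-- Measurable space structure on matrices, inherited from the pi structure. -/
instance matrixMeasurableSpace {m n α : Type*} [MeasurableSpace α] :
    MeasurableSpace (Matrix m n α) :=
  inferInstanceAs (MeasurableSpace (m → n → α))

/-! ### Symmetric-group notation (complex/unitary case) -/

/-- `κ(π)`: the number of cycles of `π`, i.e. the number of orbits of `π` on `{1,…,k}`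
(fixed points included). -/
def kappa {k : ℕ} (π : Equiv.Perm (Fin k)) : ℕ :=
  π.cycleType.card + (k - π.cycleType.sum)

/-- `Tr_π(A) = ∏_j Tr(A^{μ_j})` where `(μ_1,…,μ_l)` is the cycle-type of `π`
(fixed points of `π` contribute a factor `Tr A`). -/
def permTrace {k n : ℕ} {R : Type*} [CommRing R]
    (π : Equiv.Perm (Fin k)) (A : Matrix (Fin n) (Fin n) R) : R :=
  (π.cycleType.map fun m => (A ^ m).trace).prod * A.trace ^ (k - π.cycleType.sum)

/-- `δ_π(i,j) = ∏_{s} δ_{i_{π(s)}, j_s}`. -/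
def permDelta {k n : ℕ} (π : Equiv.Perm (Fin k)) (i j : Fin k → Fin n) : ℂ :=
  ∏ s : Fin k, if i (π s) = j s then (1 : ℂ) else 0

/-- Convolution on `L(S_k)`: `(f*g)(π) = Σ_τ f(τ) g(τ⁻¹π)`. -/
noncomputable def conv {k : ℕ} (f g : Equiv.Perm (Fin k) → ℂ) :
    Equiv.Perm (Fin k) → ℂ :=
  fun π => ∑ τ : Equiv.Perm (Fin k), f τ * g (τ⁻¹ * π)

/-- The function `π ↦ z^{κ(π)}` on `S_k`. -/
noncomputable def zk {k : ℕ} (z : ℂ) : Equiv.Perm (Fin k) → ℂ :=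
  fun π => z ^ kappa π

/-- `w` is the unitary Weingarten function with parameter `z`: the unique central function
which is the pseudo-inverse of `z^{κ(·)}` under convolution. -/
def IsUnitaryWeingarten {k : ℕ} (z : ℂ) (w : Equiv.Perm (Fin k) → ℂ) : Prop :=
  (∀ σ π : Equiv.Perm (Fin k), w (σ * π * σ⁻¹) = w π) ∧
  conv (conv (zk z) w) (zk z) = zk z ∧
  conv (conv w (zk z)) w = w

/-! ### Pair-partition notation (real/orthogonal case) -/

/-- The permutation `t_k = (1 2)(3 4)⋯(2k−1 2k)` of `{1,…,2k}` (0-indexed: swaps `2i ↔ 2i+1`). -/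
def tPerm (k : ℕ) : Equiv.Perm (Fin (2 * k)) where
  toFun x := ⟨2 * (x.1 / 2) + (1 - x.1 % 2), by omega⟩
  invFun x := ⟨2 * (x.1 / 2) + (1 - x.1 % 2), by omega⟩
  left_inv x := by ext; simp; omega
  right_inv x := by ext; simp; omega

/-- The element `2s-1` (1-indexed), i.e. `2s` (0-indexed), of `{1,…,2k}`. -/
def lo {k : ℕ} (s : Fin k) : Fin (2 * k) := ⟨2 * s.1, by omega⟩

/-- The element `2s` (1-indexed), i.e. `2s+1` (0-indexed), of `{1,…,2k}`. -/
def hi {k : ℕ} (s : Fin k) : Fin (2 * k) := ⟨2 * s.1 + 1, by omega⟩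

/-- `σ ∈ S_{2k}` represents a pair partition in `M_{2k}`:
`σ(2i−1) < σ(2i)` for all `i` and `σ(1) < σ(3) < ⋯ < σ(2k−1)`. -/
def IsMatching {k : ℕ} (σ : Equiv.Perm (Fin (2 * k))) : Prop :=
  (∀ s : Fin k, σ (lo s) < σ (hi s)) ∧
  ∀ s t : Fin k, s < t → σ (lo s) < σ (lo t)

instance {k : ℕ} : DecidablePred (IsMatching (k := k)) := fun σ => by
  unfold IsMatching; infer_instance

/-- `δ'_σ(i) = ∏_{s=1}^{k} δ_{i_{σ(2s−1)}, i_{σ(2s)}}`. -/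
def delta' {k n : ℕ} (σ : Equiv.Perm (Fin (2 * k))) (i : Fin (2 * k) → Fin n) : ℂ :=
  ∏ s : Fin k, if i (σ (lo s)) = i (σ (hi s)) then (1 : ℂ) else 0

/-- The product `♯` on `L(S_{2k})`: `(f₁ ♯ f₂)(σ) = Σ_{τ ∈ M_{2k}} f₁(στ) f₂(τ⁻¹)`. -/
noncomputable def sharp {k : ℕ} (f g : Equiv.Perm (Fin (2 * k)) → ℂ) :
    Equiv.Perm (Fin (2 * k)) → ℂ :=
  fun σ => ∑ τ : {τ : Equiv.Perm (Fin (2 * k)) // IsMatching τ}, f (σ * τ.1) * g (τ.1⁻¹)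

/-- The edge relation of the graph `Γ(σ)`: `a ∼ b` if `{a,b}` is an edge `{2i−1,2i}`
(that is, `t_k a = b`) or an edge `{σ(2i−1),σ(2i)}` (that is, `(σ t_k σ⁻¹) a = b`). -/
def gammaRel (k : ℕ) (σ : Equiv.Perm (Fin (2 * k))) (a b : Fin (2 * k)) : Prop :=
  tPerm k a = b ∨ (σ * tPerm k * σ⁻¹) a = b

/-- The setoid whose classes are the connected components of `Γ(σ)`. -/
def gammaSetoid (k : ℕ) (σ : Equiv.Perm (Fin (2 * k))) : Setoid (Fin (2 * k)) :=
  Relation.EqvGen.setoid (gammaRel k σ)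

/-- `κ'(σ)`: the number of connected components of `Γ(σ)`. -/
noncomputable def kappa' {k : ℕ} (σ : Equiv.Perm (Fin (2 * k))) : ℕ :=
  Nat.card (Quotient (gammaSetoid k σ))

/-- `Tr'_σ(A) = ∏_j Tr(A^{μ_j})` where `(μ_1,…,μ_l)` is the coset-type of `σ`:
each connected component of `Γ(σ)` with `2μ` vertices contributes a factor `Tr(A^μ)`. -/
noncomputable def trace' {k n : ℕ} {R : Type*} [CommRing R] (σ : Equiv.Perm (Fin (2 * k)))
    (A : Matrix (Fin n) (Fin n) R) : R :=
  ∏ᶠ c : Quotient (gammaSetoid k σ),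
    (A ^ (Nat.card {x : Fin (2 * k) // Quotient.mk (gammaSetoid k σ) x = c} / 2)).trace

/-- `f` is `H_k`-biinvariant, where `H_k` is the centralizer of `t_k` in `S_{2k}`. -/
def IsHkBiinvariant {k : ℕ} (f : Equiv.Perm (Fin (2 * k)) → ℂ) : Prop :=
  ∀ σ ζ : Equiv.Perm (Fin (2 * k)), ζ * tPerm k = tPerm k * ζ →
    f (ζ * σ) = f σ ∧ f (σ * ζ) = f σ

/-- The function `σ ↦ z^{κ'(σ)}` on `S_{2k}`. -/
noncomputable def zk' {k : ℕ} (z : ℂ) : Equiv.Perm (Fin (2 * k)) → ℂ :=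
  fun σ => z ^ kappa' σ

/-- `w` is the orthogonal Weingarten function with parameter `z`: the unique
`H_k`-biinvariant function which is the pseudo-inverse of `z^{κ'(·)}` under `♯`. -/
def IsOrthogonalWeingarten {k : ℕ} (z : ℂ) (w : Equiv.Perm (Fin (2 * k)) → ℂ) : Prop :=
  IsHkBiinvariant w ∧
  sharp (sharp (zk' z) w) (zk' z) = zk' z ∧
  sharp (sharp w (zk' z)) w = w

/-- `z_μ = ∏_i i^{m_i(μ)} m_i(μ)!` for a partition `μ`. -/
def zPart {k : ℕ} (μ : Nat.Partition k) : ℕ :=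
  ∏ i ∈ μ.parts.toFinset, i ^ (μ.parts.count i) * (μ.parts.count i).factorial

end WeingartenPaper

theorem Fintype.sum_prod_comp_eq_prod_sum_pow {ι κ β R : Type*} [Fintype ι] [Fintype κ]
    [DecidableEq κ] [Fintype β] [CommSemiring R] (q : ι → κ) (d : β → R) :
    ∑ f : κ → β, ∏ i, d (f (q i)) = ∏ c, ∑ b, d b ^ Fintype.card {i // q i = c} := by
  rw [Fintype.prod_sum]
  refine Fintype.sum_congr _ _ fun f => ?_
  rw [← Fintype.prod_fiberwise q]
  refine Fintype.prod_congr _ _ fun c => ?_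
  rw [Fintype.prod_congr _ (fun _ => d (f c)) fun i => by rw [i.prop], Finset.prod_const,
    Finset.card_univ]

namespace WeingartenPaper

variable {k : ℕ}

def half (x : Fin (2 * k)) : Fin k := ⟨x.1 / 2, Nat.div_lt_of_lt_mul x.2⟩

lemma half_lo (s : Fin k) : half (lo s) = s := by
  ext; simp only [half, lo]; omega

lemma half_hi (s : Fin k) : half (hi s) = s := by
  ext; simp only [half, hi]; omega

lemma half_tPerm (x : Fin (2 * k)) : half (tPerm k x) = half x := by
  ext; simp only [half, tPerm, Equiv.coe_fn_mk]; omega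

lemma tPerm_lo (s : Fin k) : tPerm k (lo s) = hi s := by
  ext; simp only [tPerm, lo, hi, Equiv.coe_fn_mk]; omega

lemma tPerm_hi (s : Fin k) : tPerm k (hi s) = lo s := by
  ext; simp only [tPerm, lo, hi, Equiv.coe_fn_mk]; omega

lemma eq_lo_half_or_eq_hi_half (x : Fin (2 * k)) : x = lo (half x) ∨ x = hi (half x) := by
  rcases Nat.mod_two_eq_zero_or_one x.1 with h | h
  · left; ext; simp only [half, lo]; omega
  · right; ext; simp only [half, hi]; omega

def halfEquiv (k : ℕ) : Fin (2 * k) ≃ Fin k × Fin 2 where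
  toFun x := (half x, ⟨x.1 % 2, by omega⟩)
  invFun p := ⟨2 * p.1.1 + p.2.1, by omega⟩
  left_inv x := by ext; simp only [half]; omega
  right_inv p := by ext <;> simp only [half] <;> omega

lemma card_subtype_half (P : Fin k → Prop) [DecidablePred P] :
    Fintype.card {x : Fin (2 * k) // P (half x)} = 2 * Fintype.card {s // P s} := by
  calc Fintype.card {x : Fin (2 * k) // P (half x)}
      = Fintype.card ({s // P s} × Fin 2) := Fintype.card_congr <|
        ((halfEquiv k).subtypeEquiv (q := fun p => P p.1) fun _ => Iff.rfl).trans
          Equiv.prodSubtypeFstEquivSubtypeProd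
    _ = 2 * Fintype.card {s // P s} := by rw [Fintype.card_prod, Fintype.card_fin, mul_comm]

variable (τ : Equiv.Perm (Fin (2 * k)))

lemma mk_eq_mk_of_gammaRel {a b : Fin (2 * k)} (h : gammaRel k τ a b) :
    (⟦a⟧ : Quotient (gammaSetoid k τ)) = ⟦b⟧ :=
  Quotient.sound (Relation.EqvGen.rel _ _ h)

lemma mk_apply_lo_eq_mk_apply_hi (s : Fin k) :
    (⟦τ (lo s)⟧ : Quotient (gammaSetoid k τ)) = ⟦τ (hi s)⟧ :=
  mk_eq_mk_of_gammaRel τ <| Or.inr <| by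
    simp only [Equiv.Perm.mul_apply, Equiv.Perm.coe_inv, Equiv.symm_apply_apply, tPerm_lo]

def pairClass (s : Fin k) : Quotient (gammaSetoid k τ) := ⟦lo s⟧

lemma pairClass_half (x : Fin (2 * k)) : pairClass τ (half x) = ⟦x⟧ := by
  rcases eq_lo_half_or_eq_hi_half x with hx | hx
  · rw [pairClass, ← hx]
  · rw [pairClass, hx, half_hi]
    exact mk_eq_mk_of_gammaRel τ (Or.inl (tPerm_lo _))

lemma pairClass_surjective : Function.Surjective (pairClass τ) :=
  Quotient.ind fun x => ⟨half x, pairClass_half τ x⟩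

lemma delta'_comp_mk {n : ℕ} (f : Quotient (gammaSetoid k τ) → Fin n) :
    delta' τ (fun x => f ⟦x⟧) = 1 :=
  Finset.prod_eq_one fun s _ => if_pos (congrArg f (mk_apply_lo_eq_mk_apply_hi τ s))

lemma exists_comp_pairClass_of_delta'_ne_zero {n : ℕ} (r : Fin k → Fin n)
    (h : delta' τ (fun x => r (half x)) ≠ 0) : ∃ f, f ∘ pairClass τ = r := by
  have hpair : ∀ s, r (half (τ (lo s))) = r (half (τ (hi s))) := by
    by_contra! ⟨s, hs⟩
    exact h (Finset.prod_eq_zero (Finset.mem_univ s) (if_neg hs))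
  have hker : gammaSetoid k τ ≤ Setoid.ker fun x => r (half x) := by
    refine Setoid.eqvGen_le fun a b hab => Setoid.ker_def.mpr ?_
    rcases hab with rfl | rfl
    · exact congrArg r (half_tPerm a).symm
    · obtain ⟨y, rfl⟩ := τ.surjective a
      simp only [Equiv.Perm.mul_apply, Equiv.Perm.coe_inv, Equiv.symm_apply_apply]
      rcases eq_lo_half_or_eq_hi_half y with hy | hy <;> rw [hy]
      · rw [tPerm_lo, hpair]
      · rw [tPerm_hi, hpair]
  refine ⟨Quotient.lift (fun x => r (half x)) hker, funext fun s => ?_⟩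
  simp only [Function.comp_apply, pairClass, Quotient.lift_mk, half_lo]

lemma trace'_diagonal [Fintype (Quotient (gammaSetoid k τ))]
    [DecidableEq (Quotient (gammaSetoid k τ))] {R : Type*} [CommRing R] {n : ℕ}
    (d : Fin n → R) :
    trace' τ (diagonal d) = ∏ c, ∑ i, d i ^ Fintype.card {s // pairClass τ s = c} := by
  rw [trace', finprod_eq_prod_of_fintype]
  refine Fintype.prod_congr _ _ fun c => ?_
  have hcard : Nat.card {x // ⟦x⟧ = c} = 2 * Fintype.card {s // pairClass τ s = c} := by
    simp_rw [← pairClass_half τ]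
    rw [Nat.card_eq_fintype_card]
    exact card_subtype_half (pairClass τ · = c)
  rw [hcard, Nat.mul_div_cancel_left _ two_pos, diagonal_pow, trace_diagonal]
  rfl

end WeingartenPaper

open WeingartenPaper

/-- For `τ ∈ S_{2k}` and a diagonal matrix `D = diag(d₁,…,dₙ)`:
`Σ_r δ'_τ(r̃) d_{r₁}⋯d_{rₖ} = Tr'_τ(D)`, where `r̃ = (r₁,r₁,r₂,r₂,…,r_k,r_k)`. -/
theorem sum_delta'_diagonal_eq_trace'
    {k n : ℕ} (τ : Equiv.Perm (Fin (2 * k))) (d : Fin n → ℂ) :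
    ∑ r : Fin k → Fin n,
        delta' τ (fun x : Fin (2 * k) => r ⟨x.1 / 2, by omega⟩) * ∏ s : Fin k, d (r s)
      = trace' τ (Matrix.diagonal d) := by
  classical
  let _ : Fintype (Quotient (gammaSetoid k τ)) := Fintype.ofFinite _
  have hout : ∀ r ∉ Set.range (· ∘ pairClass τ),
      delta' τ (fun x => r (half x)) * ∏ s, d (r s) = 0 := fun r hr => by_contra fun hne =>
    hr (exists_comp_pairClass_of_delta'_ne_zero τ r (left_ne_zero_of_mul hne))
  have hin : ∀ f : Quotient (gammaSetoid k τ) → Fin n, ∏ s, d (f (pairClass τ s)) =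
      delta' τ (fun x => (f ∘ pairClass τ) (half x)) * ∏ s, d ((f ∘ pairClass τ) s) := by
    simp only [Function.comp_apply, pairClass_half, delta'_comp_mk, one_mul, implies_true]
  calc _ = ∑ f : Quotient (gammaSetoid k τ) → Fin n, ∏ s, d (f (pairClass τ s)) :=
        (Fintype.sum_of_injective _ (pairClass_surjective τ).injective_comp_right _ _
          hout hin).symm
    _ = trace' τ (diagonal d) := by
      rw [Fintype.sum_prod_comp_eq_prod_sum_pow, trace'_diagonal]
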